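/- Let T_3 be the 3-comb, i.e., the tree obtained from a 3-vertex path a b c by adding three new vertices a', b', c' and the edges aa', bb', cc', and let R = {a', b', c'} be its set of leaves. Then the rooted tree (T_3, R) is balanced and ρ_{T_3} = 5/3. -/

import Mathlib

/-!
Each spine vertex `a, b, c` carries its own pendant edge, so `e(S) = |S| + p(S)`, where `p(S)`
counts the path edges `ab, bc` meeting `S`. A nonempty `S` containing `b` has `p(S) = 2 ≥ 2|S|/3`,
and otherwise `p(S) = |S|`; hence `ρ_S ≥ 5/3`, with equality for `S = {a, b, c}`. The seven
nonempty subsets of the spine are checked by computation.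
-/

open SimpleGraph

/-- `e(S)`: the number of edges of `T` with at least one endpoint in `S`. -/
noncomputable def edgesTouching {V : Type*} (T : SimpleGraph V) (S : Set V) : ℕ :=
  {e ∈ T.edgeSet | ∃ v ∈ S, v ∈ e}.ncard

/-- The density `ρ_S = e(S) / |S|`. -/
noncomputable def rho {V : Type*} (T : SimpleGraph V) (S : Set V) : ℝ :=
  (edgesTouching T S : ℝ) / (S.ncard : ℝ)

/-- The 3-comb `T₃`: the path `inr (0,0) — inr (0,1) — inr (0,2)` (playing the roles of
`a, b, c`) together with the pendant leaves `inl 0, inl 1, inl 2` (playing the roles of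
`a', b', c'`), where `inl j` is joined to `inr (0, j)`. -/
def threeComb : SimpleGraph (Fin 3 ⊕ (Fin 1 × Fin 3)) :=
  SimpleGraph.fromRel fun x y =>
    match x, y with
    | Sum.inl j, Sum.inr (_, jj) => j = jj
    | Sum.inr (i, j), Sum.inr (ii, jj) => i = ii ∧ (jj : ℕ) = (j : ℕ) + 1
    | _, _ => False

open Finset

section Density

variable {V : Type*} (T : SimpleGraph V)

lemma edgesTouching_coe_finset [Fintype V] [DecidableEq V] [DecidableRel T.Adj] (F : Finset V) :
    edgesTouching T ↑F = #{e ∈ T.edgeFinset | ∃ v ∈ F, v ∈ e} := by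
  rw [edgesTouching, ← Set.ncard_coe_finset]
  congr 1
  ext e
  simp

lemma rho_coe_finset [Fintype V] [DecidableEq V] [DecidableRel T.Adj] (F : Finset V) :
    rho T ↑F = (#{e ∈ T.edgeFinset | ∃ v ∈ F, v ∈ e} : ℝ) / #F := by
  rw [rho, edgesTouching_coe_finset, Set.ncard_coe_finset]

lemma le_rho_coe_finset_of_mul_le [Fintype V] [DecidableEq V] [DecidableRel T.Adj]
    {F : Finset V} (hF : F.Nonempty) {p q : ℕ} (hq : 0 < q)
    (h : p * #F ≤ q * #{e ∈ T.edgeFinset | ∃ v ∈ F, v ∈ e}) :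
    (p : ℝ) / q ≤ rho T ↑F := by
  rw [rho_coe_finset, div_le_div_iff₀ (by exact_mod_cast hq) (by exact_mod_cast hF.card_pos),
    mul_comm _ (q : ℝ)]
  exact_mod_cast h

end Density

namespace ThreeComb

abbrev Vertex := Fin 3 ⊕ (Fin 1 × Fin 3)

-- The relation inside `threeComb`, named so that its adjacency gets a `Decidable` instance.
def rel : Vertex → Vertex → Prop := fun x y =>
  match x, y with
  | Sum.inl j, Sum.inr (_, jj) => j = jj
  | Sum.inr (i, j), Sum.inr (ii, jj) => i = ii ∧ (jj : ℕ) = (j : ℕ) + 1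
  | _, _ => False

instance : DecidableRel rel := fun x y =>
  match x, y with
  | Sum.inl j, Sum.inr (_, jj) => inferInstanceAs (Decidable (j = jj))
  | Sum.inr (i, j), Sum.inr (ii, jj) =>
      inferInstanceAs (Decidable (i = ii ∧ (jj : ℕ) = (j : ℕ) + 1))
  | Sum.inl _, Sum.inl _ => inferInstanceAs (Decidable False)
  | Sum.inr _, Sum.inl _ => inferInstanceAs (Decidable False)

instance : DecidableRel threeComb.Adj := fun x y =>
  decidable_of_iff _ (fromRel_adj rel x y).symm

def spine : Finset Vertex := {Sum.inr (0, 0), Sum.inr (0, 1), Sum.inr (0, 2)}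

lemma compl_range_inl : (Set.range (Sum.inl : Fin 3 → Vertex))ᶜ = ↑spine := by
  ext x
  rcases x with j | ⟨i, j⟩
  · simp [spine]
  · fin_cases i; fin_cases j <;> simp [spine]

lemma card_edges_touching_spine : #{e ∈ threeComb.edgeFinset | ∃ v ∈ spine, v ∈ e} = 5 := by
  decide

lemma five_mul_card_le_of_mem_powerset_spine :
    ∀ F ∈ spine.powerset, F.Nonempty →
      5 * #F ≤ 3 * #{e ∈ threeComb.edgeFinset | ∃ v ∈ F, v ∈ e} := by
  decide

lemma rho_spine : rho threeComb ↑spine = 5 / 3 := by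
  rw [rho_coe_finset, card_edges_touching_spine, show #spine = 3 from rfl]
  norm_num

end ThreeComb

open ThreeComb in
/-- The rooted tree `(T₃, R)`, where `R = Set.range Sum.inl = {a', b', c'}` is the set of
leaves, is balanced (every nonempty `S ⊆ V(T₃) \ R` satisfies `ρ_S ≥ ρ_{T₃}`) and
`ρ_{T₃} = 5/3`. -/
theorem threeComb_balanced :
    (∀ S : Set (Fin 3 ⊕ (Fin 1 × Fin 3)),
      S ⊆ (Set.range Sum.inl)ᶜ → S.Nonempty →
        rho threeComb ((Set.range Sum.inl)ᶜ) ≤ rho threeComb S) ∧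
    rho threeComb ((Set.range Sum.inl)ᶜ) = 5 / 3 := by
  rw [compl_range_inl, rho_spine]
  refine ⟨fun S hS hne => ?_, rfl⟩
  obtain ⟨F, rfl⟩ := S.toFinite.exists_finset_coe
  have hF : F ∈ spine.powerset := mem_powerset.2 (coe_subset.1 hS)
  exact_mod_cast le_rho_coe_finset_of_mul_le threeComb (coe_nonempty.1 hne) (by norm_num)
    (five_mul_card_le_of_mem_powerset_spine F hF (coe_nonempty.1 hne))
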